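/- arXiv:1705.11111 — 4 statements merged into one kernel-verified Lean document; each statement's English description precedes it below -/
import Mathlib

section
/- Under Zermelo navigation with Euclidean data (ᾱ, β̄) with b̄ = ‖β̄‖ < 1, the resulting norm F = α + β with α = √((1−b̄²)ᾱ² + β̄²)/(1−b̄²) and β = −β̄/(1−b̄²) satisfies the inverse relations ᾱ² = (1−b²)(α² − β²) and β̄ = −(1−b²)β, where b = ‖β‖_α; moreover b = b̄. -/
open scoped RealInnerProductSpace

/-!
With `s = 1 - ‖W‖²`, the deformed data are `α² = (s‖y‖² + ⟪y, W⟫²)/s²` and `β = -⟪y, W⟫/s`, so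
`α² - β² = ‖y‖²/s` and both inverse relations are algebra. The `α`-norm of `β` is `‖W‖`: since
`s + ‖W‖² = 1`, the bound `β² ≤ ‖W‖² α²` reduces to `s ⟪y, W⟫² ≤ s ‖W‖² ‖y‖²`, i.e. Cauchy–Schwarz,
and it is an equality at `y = W`.
-/

namespace ZermeloNavigation

theorem one_sub_norm_sq_ne_zero {E : Type*} [SeminormedAddGroup E] {W : E} (hW : ‖W‖ ≠ 1) :
    1 - ‖W‖ ^ 2 ≠ 0 := by
  rw [sub_ne_zero]
  exact fun h => hW ((pow_eq_one_iff_of_nonneg (norm_nonneg W) two_ne_zero).1 h.symm)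

variable {V : Type*} [NormedAddCommGroup V] [InnerProductSpace ℝ V]

noncomputable def alphaSq (W y : V) : ℝ :=
  ((1 - ‖W‖ ^ 2) * ‖y‖ ^ 2 + ⟪y, W⟫ ^ 2) / (1 - ‖W‖ ^ 2) ^ 2

noncomputable def beta (W y : V) : ℝ := -⟪y, W⟫ / (1 - ‖W‖ ^ 2)

theorem real_inner_sq_le_norm_sq_mul_norm_sq (x y : V) : ⟪x, y⟫ ^ 2 ≤ ‖x‖ ^ 2 * ‖y‖ ^ 2 := by
  rw [← sq_abs, ← mul_pow]
  exact pow_le_pow_left₀ (abs_nonneg _) (abs_real_inner_le_norm x y) 2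

theorem norm_sq_eq_mul_alphaSq_sub_beta_sq {W : V} (hW : ‖W‖ ≠ 1) (y : V) :
    ‖y‖ ^ 2 = (1 - ‖W‖ ^ 2) * (alphaSq W y - beta W y ^ 2) := by
  have hs := one_sub_norm_sq_ne_zero hW
  unfold alphaSq beta
  field_simp
  ring

theorem inner_eq_neg_mul_beta {W : V} (hW : ‖W‖ ≠ 1) (y : V) :
    ⟪y, W⟫ = -(1 - ‖W‖ ^ 2) * beta W y := by
  have hs := one_sub_norm_sq_ne_zero hW
  unfold beta
  field_simp

theorem beta_sq_le_norm_sq_mul_alphaSq {W : V} (hW : ‖W‖ ≤ 1) (y : V) :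
    beta W y ^ 2 ≤ ‖W‖ ^ 2 * alphaSq W y := by
  have hs : 0 ≤ 1 - ‖W‖ ^ 2 := by
    rw [sub_nonneg]
    exact pow_le_one₀ (norm_nonneg W) hW
  have hcs : (1 - ‖W‖ ^ 2) * ⟪y, W⟫ ^ 2 ≤ (1 - ‖W‖ ^ 2) * (‖y‖ ^ 2 * ‖W‖ ^ 2) :=
    mul_le_mul_of_nonneg_left (real_inner_sq_le_norm_sq_mul_norm_sq y W) hs
  unfold alphaSq beta
  rw [div_pow, neg_sq, ← mul_div_assoc]
  exact div_le_div_of_nonneg_right (by linarith) (sq_nonneg _)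

theorem beta_self_sq_eq_norm_sq_mul_alphaSq_self (W : V) :
    beta W W ^ 2 = ‖W‖ ^ 2 * alphaSq W W := by
  have numerator : (1 - ‖W‖ ^ 2) * ‖W‖ ^ 2 + (‖W‖ ^ 2) ^ 2 = ‖W‖ ^ 2 := by ring
  unfold alphaSq beta
  rw [real_inner_self_eq_norm_sq, numerator, div_pow, neg_sq, ← mul_div_assoc, ← sq]

end ZermeloNavigation

/-- Under Zermelo navigation with Euclidean data `ᾱ(y) = ‖y‖`,
`β̄(y) = ⟪y,W⟫`, `b̄ = ‖W‖ < 1`, the deformed data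
`α² (y) = ((1-b̄²)‖y‖² + β̄(y)²)/(1-b̄²)²` and `β(y) = -β̄(y)/(1-b̄²)` satisfy the
inverse navigation relations `ᾱ² = (1-b²)(α² - β²)` and `β̄ = -(1-b²)β`, and the
`α`-norm `b` of `β` equals `b̄` (expressed by `(β y)² ≤ b̄²·α²(y)` with equality
attained at some nonzero `y`). -/
theorem navigation_deformation_inverse
    {V : Type*} [NormedAddCommGroup V] [InnerProductSpace ℝ V]
    (W : V) (hW : ‖W‖ < 1) (hW0 : W ≠ 0) :
    letI bbar : ℝ := ‖W‖
    letI α2 : V → ℝ := fun y => ((1 - bbar ^ 2) * ‖y‖ ^ 2 + ⟪y, W⟫ ^ 2) / (1 - bbar ^ 2) ^ 2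
    letI β : V → ℝ := fun y => -⟪y, W⟫ / (1 - bbar ^ 2)
    (∀ y : V, ‖y‖ ^ 2 = (1 - bbar ^ 2) * (α2 y - (β y) ^ 2)) ∧
    (∀ y : V, ⟪y, W⟫ = -(1 - bbar ^ 2) * β y) ∧
    (∀ y : V, (β y) ^ 2 ≤ bbar ^ 2 * α2 y) ∧
    (∃ y : V, y ≠ 0 ∧ (β y) ^ 2 = bbar ^ 2 * α2 y) :=
  ⟨ZermeloNavigation.norm_sq_eq_mul_alphaSq_sub_beta_sq hW.ne,
    ZermeloNavigation.inner_eq_neg_mul_beta hW.ne,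
    ZermeloNavigation.beta_sq_le_norm_sq_mul_alphaSq hW.le,
    W, hW0, ZermeloNavigation.beta_self_sq_eq_norm_sq_mul_alphaSq_self W⟩
end

section
/- With the Lorentz navigation data of the previous setting (⟨W,W⟩_L = b̄² > 1, α² = ((1−b̄²)ᾱ² + β̄²)/(b̄²−1)², β = β̄/(b̄²−1)), the α-norm of β satisfies ‖β‖_α = b̄ > 1. -/
open scoped BigOperators

/-- The standard Lorentz inner product of signature `(-,…,-,+)` on `ℝ^{n+1}`,
the last coordinate being the timelike one. -/
def lorentzInner (n : ℕ) (x y : Fin (n + 1) → ℝ) : ℝ :=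
  x (Fin.last n) * y (Fin.last n) - ∑ i : Fin n, x i.castSucc * y i.castSucc

/-!
The bound is the reverse Cauchy–Schwarz inequality `⟨W,W⟩⟨y,y⟩ ≤ ⟨W,y⟩²` for the timelike
vector `W`, which is Aczél's inequality for its time and space parts; equality holds at `y = W`.
-/

/- Aczél's inequality, with `A`, `B`, `s` standing for `‖u‖²`, `‖v‖²`, `⟪u, v⟫`.
For `A > 0` it is the identity
`A * ((w t - s)² - (w² - A)(t² - B)) = (A t - w s)² + (w² - A)(A B - s²)`. -/
theorem aczel_of_sq_le_mul {w t A B s : ℝ} (hA : 0 ≤ A) (hB : 0 ≤ B) (hs : s ^ 2 ≤ A * B)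
    (hw : A < w ^ 2) : (w ^ 2 - A) * (t ^ 2 - B) ≤ (w * t - s) ^ 2 := by
  rcases hA.eq_or_lt with rfl | hA
  · obtain rfl : s = 0 := pow_eq_zero_iff two_ne_zero |>.1 (by linarith [sq_nonneg s])
    nlinarith [mul_nonneg (sq_nonneg w) hB]
  · nlinarith [sq_nonneg (A * t - w * s), mul_nonneg (sub_nonneg.2 hw.le) (sub_nonneg.2 hs)]

theorem lorentzInner_self (n : ℕ) (x : Fin (n + 1) → ℝ) :
    lorentzInner n x x = x (Fin.last n) ^ 2 - ∑ i : Fin n, x i.castSucc ^ 2 := by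
  simp only [lorentzInner, sq]

theorem lorentzInner_self_mul_self_le_sq (n : ℕ) {W : Fin (n + 1) → ℝ}
    (hW : 0 < lorentzInner n W W) (y : Fin (n + 1) → ℝ) :
    lorentzInner n W W * lorentzInner n y y ≤ lorentzInner n W y ^ 2 := by
  simp only [lorentzInner_self] at hW ⊢
  exact aczel_of_sq_le_mul (Finset.sum_nonneg fun i _ => sq_nonneg _)
    (Finset.sum_nonneg fun i _ => sq_nonneg _)
    (Finset.sum_mul_sq_le_sq_mul_sq _ _ _) (by linarith)

/-- With Lorentz navigation data `⟨W,W⟩_L = b̄² > 1`,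
`α²(y) = ((1-b̄²)⟨y,y⟩_L + ⟨W,y⟩_L²)/(b̄²-1)²` and `β(y) = ⟨W,y⟩_L/(b̄²-1)`, the
`α`-norm of `β` equals `b̄ > 1`: `(β y)² ≤ b̄²·α²(y)` for all `y`, with equality at
some nonzero `y` (so `‖β‖_α² = b̄² > 1`). -/
theorem lorentz_navigation_beta_norm (n : ℕ) (W : Fin (n + 1) → ℝ)
    (hW : 1 < lorentzInner n W W) :
    letI b2 : ℝ := lorentzInner n W W
    letI α2 : (Fin (n + 1) → ℝ) → ℝ := fun y =>
      ((1 - b2) * lorentzInner n y y + (lorentzInner n W y) ^ 2) / (b2 - 1) ^ 2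
    letI β : (Fin (n + 1) → ℝ) → ℝ := fun y => lorentzInner n W y / (b2 - 1)
    (∀ y : Fin (n + 1) → ℝ, (β y) ^ 2 ≤ b2 * α2 y) ∧
    (∃ y : Fin (n + 1) → ℝ, y ≠ 0 ∧ (β y) ^ 2 = b2 * α2 y) ∧ 1 < b2 := by
  set b2 := lorentzInner n W W
  have hb : b2 - 1 ≠ 0 := (sub_pos.2 hW).ne'
  refine ⟨fun y => ?_, ⟨W, ?_, ?_⟩, hW⟩
  · have hrev := lorentzInner_self_mul_self_le_sq n (by linarith) y
    -- the difference of the two numerators is `(b2 - 1) * (⟨W,y⟩² - b2 * ⟨y,y⟩)`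
    have key : lorentzInner n W y ^ 2 ≤
        b2 * ((1 - b2) * lorentzInner n y y + lorentzInner n W y ^ 2) := by
      nlinarith
    simp only [div_pow, ← mul_div_assoc]
    gcongr
  · rintro rfl
    norm_num [b2, lorentzInner] at hW
  · field_simp
    ring
end

section
/- On ℝⁿ with μ ∈ ℝ, λ ∈ ℝ, and constant vector a ∈ ℝⁿ, the 1-form β̄ with β̄(x,y) = (λ⟨x,y⟩ + (1+μ|x|²)⟨a,y⟩ − μ⟨a,x⟩⟨x,y⟩)/(1+μ|x|²)^{3/2} is closed: d β̄ = 0 on the region {1+μ|x|² > 0}, where ⟨·,·⟩ is the standard Euclidean inner product. -/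
/-!
Closedness is checked by differentiating directly, for an arbitrary symmetric continuous bilinear
form `B` in place of the Euclidean inner product. Writing `s = 1 + μ B(x,x)`, the derivative of
`y ↦ β̄_y(v)` in the direction `w` is
`(λ B(v,w) - μ B(a,x) B(v,w) - μ (B(a,v) B(x,w) + B(a,w) B(x,v))
  - 3μ (λ - μ B(a,x)) B(x,v) B(x,w) / s) / s^{3/2}`,
which is visibly symmetric in `v` and `w`.
-/

open scoped BigOperators

/-- The standard Euclidean inner product on `ℝⁿ`. -/
def edot {n : ℕ} (x y : Fin n → ℝ) : ℝ := ∑ i, x i * y i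

section ConformalOneForm

variable {E : Type*} [NormedAddCommGroup E] [NormedSpace ℝ E] (B : E →L[ℝ] E →L[ℝ] ℝ)
  (μ lam : ℝ) (a : E)

noncomputable def conformalOneForm (x v : E) : ℝ :=
  (lam * B x v + (1 + μ * B x x) * B a v - μ * B a x * B x v) / (1 + μ * B x x) ^ ((3 : ℝ) / 2)

variable {B}

theorem fderiv_conformalOneForm_apply (hB : ∀ u v, B u v = B v u) {x : E}
    (hx : 0 < 1 + μ * B x x) (v w : E) :
    fderiv ℝ (fun y => conformalOneForm B μ lam a y v) x w =
      (lam * B v w - μ * B a x * B v w - μ * (B a v * B x w + B a w * B x v)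
        - 3 * μ * (lam - μ * B a x) * B x v * B x w / (1 + μ * B x x))
        / (1 + μ * B x x) ^ ((3 : ℝ) / 2) := by
  have hs :=
    ((B.hasFDerivAt_of_bilinear (hasFDerivAt_id x) (hasFDerivAt_id x)).const_mul μ).const_add 1
  have hN := (((B.flip v).hasFDerivAt.const_mul lam).add (hs.mul_const (B a v))).sub
    (((B a).hasFDerivAt.const_mul μ).mul (B.flip v).hasFDerivAt)
  have hD := hs.rpow_const (p := 3 / 2) (Or.inl hx.ne')
  have hpow : (1 + μ * B x x) ^ ((3 : ℝ) / 2) =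
      (1 + μ * B x x) * (1 + μ * B x x) ^ ((1 : ℝ) / 2) := by
    rw [← Real.rpow_one_add' hx.le (by norm_num)]; norm_num
  have hsqrt : 0 < (1 + μ * B x x) ^ ((1 : ℝ) / 2) := Real.rpow_pos_of_pos hx _
  have hβ : HasFDerivAt (fun y => conformalOneForm B μ lam a y v) _ x :=
    (hN.mul ((hasFDerivAt_inv (by rw [id, hpow]; positivity)).comp x hD)).congr_of_eventuallyEq
      (.of_forall fun y => div_eq_mul_inv _ _)
  rw [hβ.fderiv]
  have hexp : (3 : ℝ) / 2 - 1 = 1 / 2 := by norm_num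
  simp only [ContinuousLinearMap.flip_apply, id_eq, Pi.sub_apply, Pi.add_apply, Pi.mul_apply,
    ContinuousLinearMap.precompR_apply, ContinuousLinearMap.compL_apply,
    ContinuousLinearMap.comp_id, ContinuousLinearMap.precompL_apply, ContinuousLinearMap.id_apply,
    ContinuousLinearMap.comp_apply, ContinuousLinearMap.toSpanSingleton_apply, Function.comp_apply,
    add_apply, sub_apply, smul_apply, smul_eq_mul, hB w x, hB v w, hexp, hpow]
  field_simp
  ring

theorem fderiv_conformalOneForm_apply_comm (hB : ∀ u v, B u v = B v u) {x : E}
    (hx : 0 < 1 + μ * B x x) (v w : E) :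
    fderiv ℝ (fun y => conformalOneForm B μ lam a y v) x w =
      fderiv ℝ (fun y => conformalOneForm B μ lam a y w) x v := by
  rw [fderiv_conformalOneForm_apply μ lam a hB hx, fderiv_conformalOneForm_apply μ lam a hB hx,
    hB v w]
  ring

end ConformalOneForm

noncomputable def edotL (n : ℕ) : (Fin n → ℝ) →L[ℝ] (Fin n → ℝ) →L[ℝ] ℝ :=
  (dotProductBilin ℝ ℝ).toContinuousBilinearMap

theorem edotL_apply {n : ℕ} (x y : Fin n → ℝ) : edotL n x y = edot x y := rfl

theorem conformalOneForm_edotL_single {n : ℕ} (μ lam : ℝ) (a x : Fin n → ℝ) (i : Fin n) :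
    conformalOneForm (edotL n) μ lam a x (Pi.single i 1) =
      (lam * x i + (1 + μ * edot x x) * a i - μ * edot a x * x i)
        / (1 + μ * edot x x) ^ ((3 : ℝ) / 2) := by
  simp only [conformalOneForm, edotL_apply, edot, ← dotProduct.eq_1, dotProduct_single_one]

/-- On `ℝⁿ`, for `μ, λ ∈ ℝ` and a constant vector `a`, the 1-form `β̄`
with components
`b̄ᵢ(x) = (λxᵢ + (1+μ|x|²)aᵢ - μ⟨a,x⟩xᵢ)/(1+μ|x|²)^{3/2}` is closed on the region
`{1+μ|x|² > 0}`: `∂_j b̄ᵢ = ∂_i b̄ⱼ` for all `i, j`. -/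
theorem closed_conformal_one_form {n : ℕ} (μ lam : ℝ) (a : Fin n → ℝ) :
    letI b : Fin n → (Fin n → ℝ) → ℝ := fun i x =>
      (lam * x i + (1 + μ * edot x x) * a i - μ * edot a x * x i)
        / (1 + μ * edot x x) ^ ((3 : ℝ) / 2)
    ∀ x : Fin n → ℝ, 0 < 1 + μ * edot x x →
      ∀ i j : Fin n,
        fderiv ℝ (b i) x (Pi.single j 1) = fderiv ℝ (b j) x (Pi.single i 1) := by
  intro x hx i j
  beta_reduce
  simp only [← conformalOneForm_edotL_single]
  exact fderiv_conformalOneForm_apply_comm μ lam a dotProduct_comm hx _ _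
end

section
/- Let (V, ⟨·,·⟩) be a Euclidean space, β̄ a linear functional with norm b̄ satisfying 0 < b̄ < 1, and define α = √((1−b̄²)ᾱ² + β̄²)/(1−b̄²) (with ᾱ the Euclidean norm) and β = −β̄/(b̄(1−b̄²)). Then ‖β‖_α = 1, i.e. F = α + β is a singular (parabolic) Randers norm. -/
open scoped RealInnerProductSpace

/-!
The difference `α²(y) - β(y)²` equals `(b̄²‖y‖² - β̄(y)²) / (b̄²(1 - b̄²))`: the Cauchy–Schwarz
defect of `y` against `W`, divided by a positive constant. Hence `β² ≤ α²` everywhere, with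
equality along `W`.
-/

theorem randers_alphaSq_sub_betaSq {b n p : ℝ} (hb : b ≠ 0) (hs : 1 - b ^ 2 ≠ 0) :
    ((1 - b ^ 2) * n ^ 2 + p ^ 2) / (1 - b ^ 2) ^ 2 - (-p / (b * (1 - b ^ 2))) ^ 2 =
      (b ^ 2 * n ^ 2 - p ^ 2) / (b ^ 2 * (1 - b ^ 2)) := by
  field_simp
  ring

theorem real_inner_sq_le_norm_sq_mul_norm_sq {V : Type*} [NormedAddCommGroup V]
    [InnerProductSpace ℝ V] (x y : V) : ⟪x, y⟫ ^ 2 ≤ ‖y‖ ^ 2 * ‖x‖ ^ 2 := by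
  rw [← mul_pow, mul_comm]
  exact sq_le_sq.mpr (by simpa [abs_mul] using abs_real_inner_le_norm x y)

/-- Singular Randers construction. For a Euclidean space `(V,⟪·,·⟫)` and a
linear functional `β̄(y) = ⟪y,W⟫` with norm `b̄ = ‖W‖` satisfying `0 < b̄ < 1`, define
`α²(y) = ((1-b̄²)‖y‖² + β̄(y)²)/(1-b̄²)²` and `β(y) = -β̄(y)/(b̄(1-b̄²))`. Then
`‖β‖_α = 1`, i.e. `(β y)² ≤ α²(y)` for all `y` with equality attained at some nonzero
`y`, so `F = α + β` is a singular (parabolic) Randers norm. -/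
theorem singular_randers_norm_one
    {V : Type*} [NormedAddCommGroup V] [InnerProductSpace ℝ V]
    (W : V) (hW0 : 0 < ‖W‖) (hW1 : ‖W‖ < 1) :
    letI bbar : ℝ := ‖W‖
    letI α2 : V → ℝ := fun y => ((1 - bbar ^ 2) * ‖y‖ ^ 2 + ⟪y, W⟫ ^ 2) / (1 - bbar ^ 2) ^ 2
    letI β : V → ℝ := fun y => -⟪y, W⟫ / (bbar * (1 - bbar ^ 2))
    (∀ y : V, (β y) ^ 2 ≤ α2 y) ∧ (∃ y : V, y ≠ 0 ∧ (β y) ^ 2 = α2 y) := by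
  have hs : 0 < 1 - ‖W‖ ^ 2 := by nlinarith
  have defect (y : V) := randers_alphaSq_sub_betaSq (n := ‖y‖) (p := ⟪y, W⟫) hW0.ne' hs.ne'
  refine ⟨fun y => ?_, W, norm_pos_iff.mp hW0, ?_⟩
  · rw [← sub_nonneg, defect]
    exact div_nonneg (sub_nonneg.mpr (real_inner_sq_le_norm_sq_mul_norm_sq y W)) (by positivity)
  · rw [eq_comm, ← sub_eq_zero, defect, real_inner_self_eq_norm_sq]
    ring
end
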